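/- Combining the previous two results: if there exists an ε-InitSOPSF S from T(Σ) to T(Σ̂) with associated K∞ function α, and α⁻¹(ε) ≤ δ/2, and T(Σ̂) is (δ − 2α⁻¹(ε))-approximate initial-state opaque, then T(Σ) is δ-approximate initial-state opaque. -/

import Mathlib

/-!
A secret run of `T(Σ)` is shadowed, through the InitSOPSF, by a secret run of `T(Σ̂)` whose
outputs stay within `α⁻¹ ε`. Opacity of `T(Σ̂)` supplies a non-secret run within
`δ - 2 α⁻¹ ε` of it, which the InitSOPSF shadows back by a non-secret run of `T(Σ)`, again
within `α⁻¹ ε`. The triangle inequality adds the three distances up to `δ`.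
-/

open Set

theorem exists_run_of_simulation {X Xh U Uh : Type*}
    (F : X → U → Set X) (Fh : Xh → Uh → Set Xh) (R : X → Xh → Prop)
    (hR : ∀ z zh, R z zh → ∀ u, ∀ z' ∈ F z u, ∃ uh, ∃ zh' ∈ Fh zh uh, R z' zh')
    (n : ℕ) (z : ℕ → X) (hz : ∀ k < n, ∃ u, z (k + 1) ∈ F (z k) u)
    (zh₀ : Xh) (h₀ : R (z 0) zh₀) :
    ∃ zh : ℕ → Xh, zh 0 = zh₀ ∧ (∀ k < n, ∃ uh, zh (k + 1) ∈ Fh (zh k) uh) ∧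
      ∀ k ≤ n, R (z k) (zh k) := by
  induction n with
  | zero =>
    refine ⟨fun _ => zh₀, rfl, by simp, fun k hk => ?_⟩
    rwa [Nat.le_zero.mp hk]
  | succ n ih =>
    obtain ⟨zh, hzh₀, hzh, hRzh⟩ := ih fun k hk => hz k (by omega)
    obtain ⟨u, hu⟩ := hz n n.lt_succ_self
    obtain ⟨uh, zh', hzh', hR'⟩ := hR _ _ (hRzh n le_rfl) u _ hu
    have hupdate : ∀ k ≤ n, Function.update zh (n + 1) zh' k = zh k := fun k hk =>
      Function.update_of_ne (by omega) _ _
    refine ⟨Function.update zh (n + 1) zh', by rw [hupdate 0 n.zero_le, hzh₀], ?_, ?_⟩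
    · intro k hk
      rw [hupdate k (by omega)]
      rcases Nat.lt_succ_iff_lt_or_eq.mp hk with hk | rfl
      · rw [hupdate (k + 1) hk]
        exact hzh k hk
      · exact ⟨uh, by simpa using hzh'⟩
    · intro k hk
      rcases Nat.le_succ_iff.mp hk with hk | rfl
      · rw [hupdate k hk]
        exact hRzh k hk
      · simpa using hR'

theorem le_of_apply_le_of_leftInvOn {α αinv : ℝ → ℝ} (hα_mono : MonotoneOn α (Ici 0))
    (hα0 : α 0 = 0) (hαinv_left : LeftInvOn αinv α (Ici 0))
    (hαinv_mono : MonotoneOn αinv (Ici 0)) {r ε : ℝ} (hr : 0 ≤ r) (hε : 0 ≤ ε)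
    (h : α r ≤ ε) : r ≤ αinv ε := by
  have hαr : 0 ≤ α r := hα0 ▸ hα_mono self_mem_Ici hr hr
  calc r = αinv (α r) := (hαinv_left hr).symm
    _ ≤ αinv ε := hαinv_mono hαr hε h

/-- `δ`-approximate initial-state opacity. -/
def ApproxInitStateOpaque {X U Y : Type*} [PseudoMetricSpace Y]
    (X0 Xs : Set X) (F : X → U → Set X) (H : X → Y) (δ : ℝ) : Prop :=
  ∀ (n : ℕ) (z : ℕ → X), z 0 ∈ X0 ∩ Xs →
    (∀ k < n, ∃ u, z (k + 1) ∈ F (z k) u) →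
    ∃ zb : ℕ → X, zb 0 ∈ X0 \ Xs ∧
      (∀ k < n, ∃ u, zb (k + 1) ∈ F (zb k) u) ∧
      ∀ k ≤ n, dist (H (z k)) (H (zb k)) ≤ δ

theorem opacity_preserved_by_InitSOPSF_general
    {X Xh U Uh Y : Type*} [PseudoMetricSpace Y]
    (X0 Xs : Set X) (Xh0 Xhs : Set Xh)
    (F : X → U → Set X) (Fh : Xh → Uh → Set Xh)
    (H : X → Y) (Hh : Xh → Y)
    (S : X → Xh → ℝ) (ε δ : ℝ) (hε : 0 ≤ ε)
    (α αinv : ℝ → ℝ)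
    (hα_mono : StrictMonoOn α (Set.Ici 0)) (hα0 : α 0 = 0)
    (hαinv_left : ∀ r : ℝ, 0 ≤ r → αinv (α r) = r)
    (hαinv_mono : MonotoneOn αinv (Set.Ici 0))
    -- S is an ε-InitSOPSF:
    (h1a : ∀ z0 ∈ X0 ∩ Xs, ∃ zh0 ∈ Xh0 ∩ Xhs, S z0 zh0 ≤ ε)
    (h1b : ∀ zh0 ∈ Xh0 \ Xhs, ∃ z0 ∈ X0 \ Xs, S z0 zh0 ≤ ε)
    (h2 : ∀ z zh, α (dist (H z) (Hh zh)) ≤ S z zh)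
    (h3a : ∀ z zh, S z zh ≤ ε → ∀ u, ∀ z' ∈ F z u,
      ∃ uh, ∃ zh' ∈ Fh zh uh, S z' zh' ≤ ε)
    (h3b : ∀ z zh, S z zh ≤ ε → ∀ uh, ∀ zh' ∈ Fh zh uh,
      ∃ u, ∃ z' ∈ F z u, S z' zh' ≤ ε)
    (habs : ApproxInitStateOpaque Xh0 Xhs Fh Hh (δ - 2 * αinv ε)) :
    ApproxInitStateOpaque X0 Xs F H δ := by
  have hdist : ∀ z zh, S z zh ≤ ε → dist (H z) (Hh zh) ≤ αinv ε := fun z zh hS =>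
    le_of_apply_le_of_leftInvOn hα_mono.monotoneOn hα0 (fun r hr => hαinv_left r hr)
      hαinv_mono dist_nonneg hε ((h2 z zh).trans hS)
  intro n z hz₀ hz
  obtain ⟨zh₀, hzh₀, hSz₀⟩ := h1a (z 0) hz₀
  obtain ⟨zh, rfl, hzh, hSz⟩ :=
    exists_run_of_simulation F Fh (fun z zh => S z zh ≤ ε) h3a n z hz zh₀ hSz₀
  obtain ⟨zhb, hzhb₀, hzhb, hdist_abs⟩ := habs n zh hzh₀ hzh
  obtain ⟨zb₀, hzb₀, hSzb₀⟩ := h1b (zhb 0) hzhb₀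
  obtain ⟨zb, rfl, hzb, hSzb⟩ := exists_run_of_simulation Fh F (fun zh z => S z zh ≤ ε)
    (fun zh z => h3b z zh) n zhb hzhb zb₀ hSzb₀
  refine ⟨zb, hzb₀, hzb, fun k hk => ?_⟩
  calc dist (H (z k)) (H (zb k))
      ≤ dist (H (z k)) (Hh (zh k)) + dist (Hh (zh k)) (Hh (zhb k)) +
          dist (Hh (zhb k)) (H (zb k)) := dist_triangle4 _ _ _ _
    _ ≤ αinv ε + (δ - 2 * αinv ε) + αinv ε := by
        gcongr
        · exact hdist _ _ (hSz k hk)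
        · exact hdist_abs k hk
        · exact dist_comm (H (zb k)) _ ▸ hdist _ _ (hSzb k hk)
    _ = δ := by ring

/-- if there is an ε-InitSOPSF `S` from `T(Σ)` to `T(Σ̂)` with K∞
function `α`, `α⁻¹ ε ≤ δ/2`, and `T(Σ̂)` is `(δ - 2 α⁻¹ ε)`-approximate
initial-state opaque, then `T(Σ)` is `δ`-approximate initial-state opaque. -/
theorem opacity_preserved_by_InitSOPSF
    {X Xh U Uh Y : Type*} [PseudoMetricSpace Y]
    (X0 Xs : Set X) (Xh0 Xhs : Set Xh)
    (F : X → U → Set X) (Fh : Xh → Uh → Set Xh)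
    (H : X → Y) (Hh : Xh → Y)
    (S : X → Xh → ℝ) (ε δ : ℝ) (hε : 0 ≤ ε)
    (α αinv : ℝ → ℝ)
    (hα_mono : StrictMonoOn α (Set.Ici 0)) (hα0 : α 0 = 0)
    (hα_cont : ContinuousOn α (Set.Ici 0))
    (hα_unbdd : ∀ M : ℝ, ∃ r : ℝ, 0 ≤ r ∧ M ≤ α r)
    (hαinv_left : ∀ r : ℝ, 0 ≤ r → αinv (α r) = r)
    (hαinv_mono : MonotoneOn αinv (Set.Ici 0))
    (hS_nonneg : ∀ z zh, 0 ≤ S z zh)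
    -- S is an ε-InitSOPSF:
    (h1a : ∀ z0 ∈ X0 ∩ Xs, ∃ zh0 ∈ Xh0 ∩ Xhs, S z0 zh0 ≤ ε)
    (h1b : ∀ zh0 ∈ Xh0 \ Xhs, ∃ z0 ∈ X0 \ Xs, S z0 zh0 ≤ ε)
    (h2 : ∀ z zh, α (dist (H z) (Hh zh)) ≤ S z zh)
    (h3a : ∀ z zh, S z zh ≤ ε → ∀ u, ∀ z' ∈ F z u,
      ∃ uh, ∃ zh' ∈ Fh zh uh, S z' zh' ≤ ε)
    (h3b : ∀ z zh, S z zh ≤ ε → ∀ uh, ∀ zh' ∈ Fh zh uh,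
      ∃ u, ∃ z' ∈ F z u, S z' zh' ≤ ε)
    (hhalf : αinv ε ≤ δ / 2)
    (habs : ApproxInitStateOpaque Xh0 Xhs Fh Hh (δ - 2 * αinv ε)) :
    ApproxInitStateOpaque X0 Xs F H δ :=
  opacity_preserved_by_InitSOPSF_general X0 Xs Xh0 Xhs F Fh H Hh S ε δ hε α αinv hα_mono hα0
    hαinv_left hαinv_mono h1a h1b h2 h3a h3b habs
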